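/- arXiv:2602.00781 — 2 statements merged into one kernel-verified Lean document; each statement's English description precedes it below -/
import Mathlib

section
/- Consider a two-state finite-horizon MDP under the stochastic dominance assumption, and suppose additionally that p a*_1 1 1 ≥ p a*_0 0 1. Then the greedy value function is monotone in the state: V^g_k(1) ≥ V^g_k(0) for every 0 ≤ k ≤ T+1. -/
/-!
With two states, `V_h(s) = R(s, a*_s) + V_{h+1}(0) + p a*_s s 1 · (V_{h+1}(1) - V_{h+1}(0))`,
so the gap `D_h = V_h(1) - V_h(0)` obeys the affine backward recursion
`D_h = (R(1, a*_1) - R(0, a*_0)) + (p a*_1 1 1 - p a*_0 0 1) · D_{h+1}` with `D_{T+1} = 0`.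
Both coefficients are nonnegative, so `D_h ≥ 0` propagates backwards from the horizon.
-/

open Finset

lemma Fin.sum_two_mul_eq_of_sum_eq_one {q v : Fin 2 → ℝ} (hq : ∑ i, q i = 1) :
    ∑ i, q i * v i = v 0 + q 1 * (v 1 - v 0) := by
  rw [Fin.sum_univ_two] at hq ⊢
  linear_combination v 0 * hq

lemma nonneg_of_backward_affine_recursion {D : ℕ → ℝ} {r c : ℝ} {T : ℕ}
    (hr : 0 ≤ r) (hc : 0 ≤ c) (hD_top : 0 ≤ D (T + 1))
    (hD : ∀ h ≤ T, D h = r + c * D (h + 1)) :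
    ∀ k ≤ T + 1, 0 ≤ D k := fun _ hk =>
  Nat.decreasingInduction (motive := fun h _ => 0 ≤ D h)
    (fun h hh ih => (hD h (Nat.lt_succ_iff.mp hh)).symm ▸ add_nonneg hr (mul_nonneg hc ih))
    hD_top hk

theorem greedy_value_monotone_two_state_general
    {A : Type} [Fintype A] [Nonempty A]
    (p : A → Fin 2 → Fin 2 → ℝ) (R : Fin 2 → A → ℝ)
    (hp_sum : ∀ a s, ∑ s', p a s s' = 1)
    (T : ℕ)
    (Vg : ℕ → Fin 2 → ℝ)
    (astar : Fin 2 → A)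
    -- `a*_s` is a one-step greedy action: a maximizer of `R(s,·)`
    (hastar : ∀ s a, R s a ≤ R s (astar s))
    -- greedy value function, by backward recursion
    (hVg_top : ∀ s, Vg (T + 1) s = 0)
    (hVg : ∀ h ≤ T, ∀ s,
      Vg h s = R s (astar s) + ∑ s', p (astar s) s s' * Vg (h + 1) s')
    -- stochastic dominance assumption
    (hdom_reward : Finset.univ.sup' Finset.univ_nonempty (fun a => R 0 a)
      ≤ Finset.univ.sup' Finset.univ_nonempty (fun a => R 1 a))
    -- additional hypothesis
    (hcase : p (astar 0) 0 1 ≤ p (astar 1) 1 1) :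
    ∀ k ≤ T + 1, Vg k 0 ≤ Vg k 1 := by
  have hR : R 0 (astar 0) ≤ R 1 (astar 1) :=
    (le_sup' (fun a => R 0 a) (mem_univ _)).trans
      (hdom_reward.trans (sup'_le _ _ fun a _ => hastar 1 a))
  have hgap : ∀ h ≤ T, Vg h 1 - Vg h 0 = (R 1 (astar 1) - R 0 (astar 0)) +
      (p (astar 1) 1 1 - p (astar 0) 0 1) * (Vg (h + 1) 1 - Vg (h + 1) 0) := by
    intro h hh
    rw [hVg h hh 0, hVg h hh 1, Fin.sum_two_mul_eq_of_sum_eq_one (hp_sum _ 0),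
      Fin.sum_two_mul_eq_of_sum_eq_one (hp_sum _ 1)]
    ring
  intro k hk
  exact sub_nonneg.mp <| nonneg_of_backward_affine_recursion (sub_nonneg.mpr hR)
    (sub_nonneg.mpr hcase) (by simp [hVg_top]) hgap k hk

/-- In a two-state finite-horizon MDP under the stochastic dominance
assumption, with additionally `p a*_1 1 1 ≥ p a*_0 0 1`, the greedy value function
is monotone in the state: `V^g_k(1) ≥ V^g_k(0)` for every `0 ≤ k ≤ T+1`. -/
theorem greedy_value_monotone_two_state
    {A : Type} [Fintype A] [Nonempty A]
    (p : A → Fin 2 → Fin 2 → ℝ) (R : Fin 2 → A → ℝ)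
    (hp_nonneg : ∀ a s s', 0 ≤ p a s s')
    (hp_sum : ∀ a s, ∑ s', p a s s' = 1)
    (T : ℕ)
    (Vg : ℕ → Fin 2 → ℝ)
    (astar : Fin 2 → A)
    -- `a*_s` is a one-step greedy action: a maximizer of `R(s,·)`
    (hastar : ∀ s a, R s a ≤ R s (astar s))
    -- greedy value function, by backward recursion
    (hVg_top : ∀ s, Vg (T + 1) s = 0)
    (hVg : ∀ h ≤ T, ∀ s,
      Vg h s = R s (astar s) + ∑ s', p (astar s) s s' * Vg (h + 1) s')
    -- stochastic dominance assumption
    (hdom_reward : Finset.univ.sup' Finset.univ_nonempty (fun a => R 0 a)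
      ≤ Finset.univ.sup' Finset.univ_nonempty (fun a => R 1 a))
    (hdom_trans : ∀ s a, p a s 1 ≤ p (astar s) s 1)
    -- additional hypothesis
    (hcase : p (astar 0) 0 1 ≤ p (astar 1) 1 1) :
    ∀ k ≤ T + 1, Vg k 0 ≤ Vg k 1 :=
  greedy_value_monotone_two_state_general p R hp_sum T Vg astar hastar hVg_top hVg hdom_reward hcase
end

section
/- Consider a two-state finite-horizon MDP under the stochastic dominance assumption. Then the optimal value function is monotone in the state: V*_k(1) ≥ V*_k(0) for every 0 ≤ k ≤ T+1. -/
/-!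
Let `Δ_h = V*_h(1) - V*_h(0)`. Once `Δ_{h+1} ≥ 0`, the one-step greedy action is optimal in both
states at step `h`, because it maximizes the reward and, by stochastic dominance, also the chance
of moving to the better state `1`. Then `Δ_h = δ + c Δ_{h+1}`, with `δ ≥ 0` the gap of the maximal
rewards and `c ≥ -1` the gap of the greedy probabilities of reaching `1`. Backward induction with
the invariant `0 ≤ Δ ∧ 0 ≤ δ + c Δ` finishes the proof: `δ + c (δ + c Δ) = δ (1 + c) + c² Δ ≥ 0`.
-/

open Finset

theorem Finset.sup'_univ_eq_of_forall_le {α β : Type*} [Fintype α] [Nonempty α]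
    [SemilatticeSup β] {f : α → β} {a : α} (h : ∀ b, f b ≤ f a) :
    univ.sup' univ_nonempty f = f a :=
  le_antisymm (sup'_le _ _ fun b _ => h b) (le_sup' f (mem_univ a))

theorem sum_fin_two_mul_eq_of_sum_eq_one {q : Fin 2 → ℝ} (hq : ∑ i, q i = 1) (v : Fin 2 → ℝ) :
    ∑ i, q i * v i = v 0 + q 1 * (v 1 - v 0) := by
  rw [Fin.sum_univ_two] at hq ⊢
  rw [show q 0 = 1 - q 1 by linarith]
  ring

theorem add_mul_add_mul_nonneg {δ c x : ℝ} (hδ : 0 ≤ δ) (hc : -1 ≤ c) (hx : 0 ≤ x) :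
    0 ≤ δ + c * (δ + c * x) := by
  have hc' : 0 ≤ 1 + c := by linarith
  calc 0 ≤ δ * (1 + c) + c ^ 2 * x := by positivity
    _ = δ + c * (δ + c * x) := by ring

section Bellman

variable {A : Type*} [Fintype A] [Nonempty A] (p : A → Fin 2 → Fin 2 → ℝ) (R : Fin 2 → A → ℝ)

noncomputable def bellman (v : Fin 2 → ℝ) (s : Fin 2) : ℝ :=
  univ.sup' univ_nonempty fun a => R s a + ∑ s', p a s s' * v s'

variable {p R} {astar : Fin 2 → A}

theorem bellman_eq_greedy (hp_sum : ∀ a s, ∑ s', p a s s' = 1)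
    (hastar : ∀ s a, R s a ≤ R s (astar s)) (hdom_trans : ∀ s a, p a s 1 ≤ p (astar s) s 1)
    {v : Fin 2 → ℝ} (hv : v 0 ≤ v 1) (s : Fin 2) :
    bellman p R v s = R s (astar s) + v 0 + p (astar s) s 1 * (v 1 - v 0) := by
  have hQ : ∀ a, R s a + ∑ s', p a s s' * v s' = R s a + v 0 + p a s 1 * (v 1 - v 0) := by
    intro a
    rw [sum_fin_two_mul_eq_of_sum_eq_one (hp_sum a s), add_assoc]
  rw [bellman, sup'_univ_eq_of_forall_le (a := astar s), hQ]
  intro a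
  rw [hQ, hQ]
  gcongr
  · exact hastar s a
  · exact hdom_trans s a

theorem bellman_sub_bellman (hp_sum : ∀ a s, ∑ s', p a s s' = 1)
    (hastar : ∀ s a, R s a ≤ R s (astar s)) (hdom_trans : ∀ s a, p a s 1 ≤ p (astar s) s 1)
    {v : Fin 2 → ℝ} (hv : v 0 ≤ v 1) :
    bellman p R v 1 - bellman p R v 0 = (R 1 (astar 1) - R 0 (astar 0))
      + (p (astar 1) 1 1 - p (astar 0) 0 1) * (v 1 - v 0) := by
  rw [bellman_eq_greedy hp_sum hastar hdom_trans hv, bellman_eq_greedy hp_sum hastar hdom_trans hv]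
  ring

end Bellman

/-- In a two-state finite-horizon MDP under the stochastic dominance
assumption, the optimal value function is monotone in the state:
`V*_k(1) ≥ V*_k(0)` for every `0 ≤ k ≤ T+1`. -/
theorem optimal_value_monotone_two_state
    {A : Type} [Fintype A] [Nonempty A]
    (p : A → Fin 2 → Fin 2 → ℝ) (R : Fin 2 → A → ℝ)
    (hp_nonneg : ∀ a s s', 0 ≤ p a s s')
    (hp_sum : ∀ a s, ∑ s', p a s s' = 1)
    (T : ℕ)
    (Vstar : ℕ → Fin 2 → ℝ) (Qstar : ℕ → Fin 2 → A → ℝ)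
    (astar : Fin 2 → A)
    -- `a*_s` is a one-step greedy action: a maximizer of `R(s,·)`
    (hastar : ∀ s a, R s a ≤ R s (astar s))
    -- optimal value functions, by backward recursion
    (hVstar_top : ∀ s, Vstar (T + 1) s = 0)
    (hQstar : ∀ h ≤ T, ∀ s a, Qstar h s a = R s a + ∑ s', p a s s' * Vstar (h + 1) s')
    (hVstar : ∀ h ≤ T, ∀ s,
      Vstar h s = Finset.univ.sup' Finset.univ_nonempty (fun a => Qstar h s a))
    -- stochastic dominance assumption
    (hdom_reward : Finset.univ.sup' Finset.univ_nonempty (fun a => R 0 a)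
      ≤ Finset.univ.sup' Finset.univ_nonempty (fun a => R 1 a))
    (hdom_trans : ∀ s a, p a s 1 ≤ p (astar s) s 1) :
    ∀ k ≤ T + 1, Vstar k 0 ≤ Vstar k 1 := by
  set δ := R 1 (astar 1) - R 0 (astar 0)
  set c := p (astar 1) 1 1 - p (astar 0) 0 1
  have hδ : 0 ≤ δ := by
    rw [sup'_univ_eq_of_forall_le (hastar 0), sup'_univ_eq_of_forall_le (hastar 1)] at hdom_reward
    linarith
  have hc : -1 ≤ c := by
    have h0 := hp_sum (astar 0) 0
    rw [Fin.sum_univ_two] at h0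
    linarith [hp_nonneg (astar 1) 1 1, hp_nonneg (astar 0) 0 0]
  have hV : ∀ h ≤ T, Vstar h = bellman p R (Vstar (h + 1)) := fun h hh => funext fun s => by
    simp only [hVstar h hh s, hQstar h hh s, bellman]
  have hinv : ∀ k ≤ T + 1,
      0 ≤ Vstar k 1 - Vstar k 0 ∧ 0 ≤ δ + c * (Vstar k 1 - Vstar k 0) := by
    refine fun k hk => Nat.decreasingInduction (fun k hk ⟨hgap, hnext⟩ => ?_) ?_ hk
    · have hstep : Vstar k 1 - Vstar k 0 = δ + c * (Vstar (k + 1) 1 - Vstar (k + 1) 0) := by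
        rw [hV k (by omega)]
        exact bellman_sub_bellman hp_sum hastar hdom_trans (sub_nonneg.1 hgap)
      rw [hstep]
      exact ⟨hnext, add_mul_add_mul_nonneg hδ hc hgap⟩
    · simp only [hVstar_top, sub_self, mul_zero, add_zero, le_refl, hδ, and_self]
  exact fun k hk => sub_nonneg.1 (hinv k hk).1
end
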